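/- arXiv:1901.08958 — 7 statements merged into one kernel-verified Lean document; each statement's English description precedes it below -/
import Mathlib

section
/- For any constant ĉ ≥ 3 there exists an absolute constant c_max > 0 with the following property. Let f : ℝ^d → ℝ be twice differentiable with L-Lipschitz gradient and ρ-Lipschitz Hessian, let λ ≥ 0, γ > 0, κ = L/γ, and δ ∈ (0, dκ/e]. Suppose x̃ satisfies ‖L(x̃ − S_{λ/L}(x̃ − (1/L)∇f(x̃)))‖ ≤ 𝒢 and λ_min(∇²f(x̃)) ≤ −γ. Let u_t be the proximal gradient sequence u_{t+1} = S_{ηλ}(u_t − η∇f(u_t)) with initial point u₀ satisfying ‖u₀ − x̃‖ ≤ 2𝒮/(κ·ln(dκ/δ)), and define T = min{ inf{ t : f̃_{u₀}(u_t) − f(u₀) + λ‖u_t‖₁ − λ‖u₀‖₁ ≤ −3𝒻 }, ĉ·𝒯 }. Then for any η ≤ c_max/L and all t < T, ‖u_t − x̃‖ ≤ 100·𝒮·ĉ. -/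
/-!
A proximal gradient step with `η L ≤ 1` decreases `F = f + λ‖·‖₁` by at least
`‖u_{s+1} - u_s‖² / (2η)`, so by Cauchy–Schwarz `D_m² ≤ 2 m η (F u₀ - F u_m)` for
`D_m = ‖u_m - u₀‖`. Without sufficient decrease, the cubic Taylor bound for `f` caps
`F u₀ - F u_m` by `3𝓕 + (ρ/2)(‖u₀ - x̃‖ + D_m) D_m²`. For `m < ĉ 𝓣` the identities
`η 𝓕 𝓣 = 𝓢²` and `η ρ 𝓢 𝓣 = √(η L)` turn this into
`D_m² ≤ 6 ĉ 𝓢² + ĉ √(η L) (‖u₀ - x̃‖ + D_m) D_m² / 𝓢`. One step of the (2-Lipschitz)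
iteration from `D_{m-1} ≤ 2 ĉ 𝓢` keeps `D_m = O(ĉ 𝓢)`, so for `√(η L)` small the cubic term
is absorbed and `D_m ≤ 2 ĉ 𝓢` follows by induction.
-/

open scoped RealInnerProductSpace

/-- Soft-thresholding operator `S_c` on `ℝ^d`. -/
noncomputable def soft {d : ℕ} (c : ℝ) (x : EuclideanSpace ℝ (Fin d)) :
    EuclideanSpace ℝ (Fin d) :=
  WithLp.toLp 2 (fun i => Real.sign (x i) * max (|x i| - c) 0)

/-- The `ℓ¹` norm on `ℝ^d`. -/
noncomputable def l1 {d : ℕ} (x : EuclideanSpace ℝ (Fin d)) : ℝ := ∑ i, |x i|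

/-- The Hessian of `f` at `x`, as the Fréchet derivative of the gradient. -/
noncomputable def hess {d : ℕ} (f : EuclideanSpace ℝ (Fin d) → ℝ)
    (x : EuclideanSpace ℝ (Fin d)) :
    EuclideanSpace ℝ (Fin d) →L[ℝ] EuclideanSpace ℝ (Fin d) :=
  fderiv ℝ (gradient f) x

/-- The quadratic approximation of `f` at `y`, with Hessian taken at `xt`. -/
noncomputable def ftilde {d : ℕ} (f : EuclideanSpace ℝ (Fin d) → ℝ)
    (xt y x : EuclideanSpace ℝ (Fin d)) : ℝ :=
  f y + ⟪gradient f y, x - y⟫ + (1 / 2) * ⟪x - y, hess f xt (x - y)⟫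

open Set

noncomputable def softThreshold (c w : ℝ) : ℝ := Real.sign w * max (|w| - c) 0

lemma soft_apply {d : ℕ} (c : ℝ) (x : EuclideanSpace ℝ (Fin d)) (i : Fin d) :
    soft c x i = softThreshold c (x i) := rfl

/-- The variational inequality characterising `softThreshold c w` as the proximal point of
`c |·|` at `w`. -/
lemma softThreshold_prox_ineq {c : ℝ} (hc : 0 ≤ c) (w z : ℝ) :
    c * |softThreshold c w| + (w - softThreshold c w) * (z - softThreshold c w) ≤ c * |z| := by
  unfold softThreshold
  rcases le_or_gt |w| c with hw | hw
  · rw [max_eq_right (by linarith), mul_zero, abs_zero, mul_zero, zero_add, sub_zero, sub_zero]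
    calc w * z ≤ |w| * |z| := by rw [← abs_mul]; exact le_abs_self _
      _ ≤ c * |z| := by gcongr
  · rw [max_eq_left (by linarith)]
    rcases lt_or_gt_of_ne (show w ≠ 0 by rintro rfl; simp at hw; linarith) with hneg | hpos
    · rw [Real.sign_of_neg hneg, abs_of_neg hneg] at *
      rw [abs_of_nonpos (by linarith)]
      nlinarith [neg_abs_le z]
    · rw [Real.sign_of_pos hpos, abs_of_pos hpos] at *
      rw [abs_of_nonneg (by linarith)]
      nlinarith [le_abs_self z]

lemma soft_prox_ineq {d : ℕ} {c : ℝ} (hc : 0 ≤ c) (w z : EuclideanSpace ℝ (Fin d)) :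
    c * l1 (soft c w) + ⟪w - soft c w, z - soft c w⟫ ≤ c * l1 z := by
  simp only [l1, PiLp.inner_apply, RCLike.inner_apply, conj_trivial, Finset.mul_sum,
    ← Finset.sum_add_distrib]
  refine Finset.sum_le_sum fun i _ => ?_
  simpa only [PiLp.sub_apply, soft_apply, mul_comm (z i - _)] using
    softThreshold_prox_ineq hc (w i) (z i)

lemma norm_soft_sub_soft_le {d : ℕ} {c : ℝ} (hc : 0 ≤ c) (x y : EuclideanSpace ℝ (Fin d)) :
    ‖soft c x - soft c y‖ ≤ ‖x - y‖ := by
  set p := soft c x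
  set q := soft c y
  have hx := soft_prox_ineq hc x q
  have hy := soft_prox_ineq hc y p
  -- adding the two prox inequalities cancels the `ℓ¹` terms
  have key : ‖p - q‖ ^ 2 ≤ ⟪x - y, p - q⟫ := by
    have e : ⟪x - y, p - q⟫ - ‖p - q‖ ^ 2 = -⟪x - p, q - p⟫ - ⟪y - q, p - q⟫ := by
      rw [← real_inner_self_eq_norm_sq]
      simp only [inner_sub_left, inner_sub_right, real_inner_comm]
      ring
    linarith
  have := key.trans (real_inner_le_norm _ _)
  by_contra! h
  nlinarith [norm_nonneg (x - y)]

lemma norm_le_norm_of_inner_smul_sub_smul_nonpos {E : Type*} [NormedAddCommGroup E]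
    [InnerProductSpace ℝ E] {a b : E} {c₁ c₂ : ℝ} (h₁ : 0 < c₁) (h₁₂ : c₁ ≤ c₂)
    (h : ⟪c₂ • a - c₁ • b, a - b⟫ ≤ 0) : ‖a‖ ≤ ‖b‖ := by
  have hab := real_inner_le_norm a b
  simp only [inner_sub_left, inner_sub_right, real_inner_smul_left, real_inner_self_eq_norm_sq,
    real_inner_comm a b] at h
  by_contra! hlt
  have hpos : 0 < c₂ * ‖a‖ - c₁ * ‖b‖ := by nlinarith [norm_nonneg b]
  nlinarith [mul_pos hpos (sub_pos.mpr hlt),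
    mul_le_mul_of_nonneg_left hab (by linarith : 0 ≤ c₁ + c₂)]

lemma abs_le_half_of_abs_deriv_le_mul {φ φ' : ℝ → ℝ} {C : ℝ} (hφ : ∀ t, HasDerivAt φ (φ' t) t)
    (h₀ : φ 0 = 0) (hφ' : ∀ t ∈ Ico (0 : ℝ) 1, |φ' t| ≤ C * t) : |φ 1| ≤ C / 2 := by
  have hB : ∀ t : ℝ, HasDerivAt (fun s => C / 2 * s ^ 2) (C * t) t := fun t => by
    refine ((hasDerivAt_pow 2 t).const_mul (C / 2)).congr_deriv ?_
    norm_num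
    ring
  have := image_norm_le_of_norm_deriv_right_le_deriv_boundary
    (fun t _ => (hφ t).continuousAt.continuousWithinAt) (fun t _ => (hφ t).hasDerivWithinAt)
    (by simp [h₀]) hB hφ' (right_mem_Icc.mpr zero_le_one)
  simpa using this

lemma hasDerivAt_comp_line {E F : Type*} [NormedAddCommGroup E] [NormedSpace ℝ E]
    [NormedAddCommGroup F] [NormedSpace ℝ F] {g : E → F} {g' : E →L[ℝ] F} (x v : E) {t : ℝ}
    (hg : HasFDerivAt g g' (x + t • v)) :
    HasDerivAt (fun s : ℝ => g (x + s • v)) (g' v) t := by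
  have hline : HasDerivAt (fun s : ℝ => x + s • v) v t := by
    simpa using ((hasDerivAt_id t).smul_const v).const_add x
  exact hg.comp_hasDerivAt t hline

section LineDerivatives

variable {E : Type*} [NormedAddCommGroup E] [InnerProductSpace ℝ E] [CompleteSpace E]
  {f : E → ℝ}

lemma hasDerivAt_comp_line_of_hasGradientAt (x v : E) {t : ℝ} {g : E}
    (hf : HasGradientAt f g (x + t • v)) :
    HasDerivAt (fun s : ℝ => f (x + s • v)) ⟪g, v⟫ t := by
  simpa using hasDerivAt_comp_line x v hf.hasFDerivAt

theorem abs_sub_sub_inner_gradient_le {L : ℝ} (hf : Differentiable ℝ f)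
    (hL : ∀ x y, ‖gradient f x - gradient f y‖ ≤ L * ‖x - y‖) (x y : E) :
    |f y - f x - ⟪gradient f x, y - x⟫| ≤ L / 2 * ‖y - x‖ ^ 2 := by
  set v := y - x
  have hφ : ∀ t : ℝ, HasDerivAt (fun s => f (x + s • v) - f x - s * ⟪gradient f x, v⟫)
      (⟪gradient f (x + t • v) - gradient f x, v⟫) t := fun t => by
    rw [inner_sub_left]
    exact ((hasDerivAt_comp_line_of_hasGradientAt x v (hf _).hasGradientAt).sub_const _).sub
      (by simpa using (hasDerivAt_id t).mul_const ⟪gradient f x, v⟫)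
  have hφ' : ∀ t ∈ Ico (0 : ℝ) 1,
      |⟪gradient f (x + t • v) - gradient f x, v⟫| ≤ L * ‖v‖ ^ 2 * t := fun t ht => by
    calc _ ≤ ‖gradient f (x + t • v) - gradient f x‖ * ‖v‖ := abs_real_inner_le_norm _ _
      _ ≤ L * (t * ‖v‖) * ‖v‖ := by
          gcongr
          simpa [norm_smul, abs_of_nonneg ht.1] using hL (x + t • v) x
      _ = L * ‖v‖ ^ 2 * t := by ring
  have := abs_le_half_of_abs_deriv_le_mul hφ (by simp) hφ'
  simpa [v, mul_div_right_comm] using this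

end LineDerivatives

lemma le_opNorm_of_inner_apply_le_neg {E : Type*} [NormedAddCommGroup E] [InnerProductSpace ℝ E]
    {T : E →L[ℝ] E} {v : E} {γ : ℝ} (hv : ‖v‖ = 1) (h : ⟪v, T v⟫ ≤ -γ) : γ ≤ ‖T‖ := by
  have h₁ := abs_real_inner_le_norm v (T v)
  have h₂ := T.le_opNorm v
  rw [hv, one_mul] at h₁
  rw [hv, mul_one] at h₂
  linarith [neg_abs_le ⟪v, T v⟫]

section Hessian

variable {d : ℕ} {f : EuclideanSpace ℝ (Fin d) → ℝ}

lemma norm_hess_le {L : ℝ} (hL₀ : 0 ≤ L) (hg : Differentiable ℝ (gradient f))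
    (hL : ∀ x y, ‖gradient f x - gradient f y‖ ≤ L * ‖x - y‖) (x : EuclideanSpace ℝ (Fin d)) :
    ‖hess f x‖ ≤ L := by
  have hlip : LipschitzWith L.toNNReal (gradient f) :=
    LipschitzWith.of_dist_le' fun x y => by simpa only [dist_eq_norm] using hL x y
  simpa [hess, Real.coe_toNNReal _ hL₀] using (hg x).hasFDerivAt.le_of_lipschitz hlip

theorem abs_sub_ftilde_le {ρ : ℝ} (hρ : 0 ≤ ρ) (hf : Differentiable ℝ f)
    (hg : Differentiable ℝ (gradient f)) (hH : ∀ x y, ‖hess f x - hess f y‖ ≤ ρ * ‖x - y‖)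
    (xt y x : EuclideanSpace ℝ (Fin d)) :
    |f x - ftilde f xt y x| ≤ ρ / 2 * (‖y - xt‖ + ‖x - y‖) * ‖x - y‖ ^ 2 := by
  set h := x - y
  set Q := ⟪hess f xt h, h⟫
  set C := ρ * (‖y - xt‖ + ‖h‖) * ‖h‖ ^ 2
  set φ' : ℝ → ℝ := fun t => ⟪gradient f (y + t • h), h⟫ - ⟪gradient f y, h⟫ - t * Q
  have hφ : ∀ t : ℝ,
      HasDerivAt (fun s => f (y + s • h) - f y - s * ⟪gradient f y, h⟫ - s ^ 2 / 2 * Q)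
        (φ' t) t := fun t => by
    have hQ : HasDerivAt (fun s : ℝ => s ^ 2 / 2 * Q) (t * Q) t := by
      refine (((hasDerivAt_pow 2 t).div_const 2).mul_const Q).congr_deriv ?_
      norm_num
    exact (((hasDerivAt_comp_line_of_hasGradientAt y h (hf _).hasGradientAt).sub_const _).sub
      (by simpa using (hasDerivAt_id t).mul_const ⟪gradient f y, h⟫)).sub hQ
  have hφ'' : ∀ t : ℝ, HasDerivAt φ' (⟪(hess f (y + t • h) - hess f xt) h, h⟫) t := fun t => by
    have hgrad := hasDerivAt_comp_line y h (hg (y + t • h)).hasFDerivAt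
    refine (((hgrad.inner ℝ (hasDerivAt_const t h)).sub_const ⟪gradient f y, h⟫).sub
      ((hasDerivAt_id t).mul_const Q)).congr_deriv ?_
    simp [hess, Q, inner_sub_left]
  have hφ''_le : ∀ t ∈ Ico (0 : ℝ) 1,
      ‖⟪(hess f (y + t • h) - hess f xt) h, h⟫‖ ≤ C := fun t ht => by
    have hdist : ‖y + t • h - xt‖ ≤ ‖y - xt‖ + ‖h‖ := by
      calc ‖y + t • h - xt‖ = ‖(y - xt) + t • h‖ := by congr 1; abel
        _ ≤ ‖y - xt‖ + t * ‖h‖ := by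
            simpa [norm_smul, abs_of_nonneg ht.1] using norm_add_le (y - xt) (t • h)
        _ ≤ ‖y - xt‖ + ‖h‖ := by gcongr; exact mul_le_of_le_one_left (norm_nonneg h) ht.2.le
    calc ‖⟪(hess f (y + t • h) - hess f xt) h, h⟫‖
        ≤ ‖hess f (y + t • h) - hess f xt‖ * ‖h‖ * ‖h‖ := by
          rw [Real.norm_eq_abs]
          exact (abs_real_inner_le_norm _ _).trans
            (by gcongr; exact ContinuousLinearMap.le_opNorm _ _)
      _ ≤ ρ * (‖y - xt‖ + ‖h‖) * ‖h‖ * ‖h‖ := by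
          gcongr
          exact (hH _ _).trans (by gcongr)
      _ = C := by ring
  have hφ'_le : ∀ t ∈ Ico (0 : ℝ) 1, |φ' t| ≤ C * t := fun t ht => by
    simpa [φ'] using norm_image_sub_le_of_norm_deriv_le_segment'
      (fun s _ => (hφ'' s).hasDerivWithinAt) hφ''_le t (Ico_subset_Icc_self ht)
  have := abs_le_half_of_abs_deriv_le_mul hφ (by simp) hφ'_le
  have hx : y + (1 : ℝ) • h = x := by simp [h]
  rw [hx] at this
  change |f x - (f y + ⟪gradient f y, h⟫ + 1 / 2 * ⟪h, hess f xt h⟫)| ≤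
    ρ / 2 * (‖y - xt‖ + ‖h‖) * ‖h‖ ^ 2
  rw [real_inner_comm (hess f xt h) h]
  convert this using 2 <;> ring

end Hessian

lemma sq_norm_sub_le_of_sq_norm_succ_sub_le {E : Type*} [SeminormedAddCommGroup E] {u : ℕ → E}
    {a : ℕ → ℝ} (h : ∀ s, ‖u (s + 1) - u s‖ ^ 2 ≤ a s - a (s + 1)) {m : ℕ} {T : ℝ}
    (hm : (m : ℝ) ≤ T) :
    ‖u m - u 0‖ ^ 2 ≤ T * (a 0 - a m) := by
  have hsum : 0 ≤ ∑ s ∈ Finset.range m, ‖u (s + 1) - u s‖ ^ 2 := by positivity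
  calc ‖u m - u 0‖ ^ 2 ≤ (∑ s ∈ Finset.range m, ‖u (s + 1) - u s‖) ^ 2 := by
        gcongr
        rw [← Finset.sum_range_sub u m]
        exact norm_sum_le _ _
    _ ≤ m * ∑ s ∈ Finset.range m, ‖u (s + 1) - u s‖ ^ 2 := by
        simpa using sq_sum_le_card_mul_sum_sq (s := Finset.range m)
    _ ≤ T * ∑ s ∈ Finset.range m, ‖u (s + 1) - u s‖ ^ 2 := by gcongr
    _ ≤ T * (a 0 - a m) := by
        gcongr
        · exact m.cast_nonneg.trans hm
        rw [← Finset.sum_range_sub' a m]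
        exact Finset.sum_le_sum fun s _ => h s

section ProximalGradient

variable {d : ℕ} {f : EuclideanSpace ℝ (Fin d) → ℝ} {lam η L : ℝ}

noncomputable def composite (f : EuclideanSpace ℝ (Fin d) → ℝ) (lam : ℝ)
    (x : EuclideanSpace ℝ (Fin d)) : ℝ :=
  f x + lam * l1 x

noncomputable def proxGradStep (f : EuclideanSpace ℝ (Fin d) → ℝ) (lam η : ℝ)
    (x : EuclideanSpace ℝ (Fin d)) : EuclideanSpace ℝ (Fin d) :=
  soft (η * lam) (x - η • gradient f x)

lemma sq_norm_proxGradStep_sub_self_le (hlam : 0 ≤ lam) (hη : 0 < η) (hηL : η * L ≤ 1)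
    (hf : Differentiable ℝ f) (hL : ∀ x y, ‖gradient f x - gradient f y‖ ≤ L * ‖x - y‖)
    (x : EuclideanSpace ℝ (Fin d)) :
    ‖proxGradStep f lam η x - x‖ ^ 2 ≤
      2 * η * (composite f lam x - composite f lam (proxGradStep f lam η x)) := by
  set p := proxGradStep f lam η x
  set g := gradient f x
  have hprox : η * lam * l1 p + (‖p - x‖ ^ 2 - η * ⟪g, x - p⟫) ≤ η * lam * l1 x := by
    have e : ⟪x - η • g - p, x - p⟫ = ‖p - x‖ ^ 2 - η * ⟪g, x - p⟫ := by
      rw [sub_right_comm, inner_sub_left, real_inner_smul_left, real_inner_self_eq_norm_sq,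
        norm_sub_rev]
    have := soft_prox_ineq (c := η * lam) (by positivity) (x - η • g) x
    change η * lam * l1 p + ⟪x - η • g - p, x - p⟫ ≤ _ at this
    rwa [e] at this
  have hsmooth : f p ≤ f x - ⟪g, x - p⟫ + L / 2 * ‖p - x‖ ^ 2 := by
    have := (abs_le.mp (abs_sub_sub_inner_gradient_le hf hL x p)).2
    have e : ⟪g, p - x⟫ = -⟪g, x - p⟫ := by rw [← inner_neg_right, neg_sub]
    rw [e] at this
    linarith
  have hLp : η * L * ‖p - x‖ ^ 2 ≤ ‖p - x‖ ^ 2 := mul_le_of_le_one_left (sq_nonneg _) hηL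
  simp only [composite]
  nlinarith [mul_le_mul_of_nonneg_left hsmooth hη.le]

lemma norm_proxGradStep_sub_proxGradStep_le (hlam : 0 ≤ lam) (hη : 0 ≤ η)
    (hL : ∀ x y, ‖gradient f x - gradient f y‖ ≤ L * ‖x - y‖) (x y : EuclideanSpace ℝ (Fin d)) :
    ‖proxGradStep f lam η x - proxGradStep f lam η y‖ ≤ (1 + η * L) * ‖x - y‖ := by
  calc _ ≤ ‖(x - η • gradient f x) - (y - η • gradient f y)‖ :=
        norm_soft_sub_soft_le (by positivity) _ _
    _ = ‖(x - y) - η • (gradient f x - gradient f y)‖ := by rw [smul_sub]; abel_nf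
    _ ≤ ‖x - y‖ + η * ‖gradient f x - gradient f y‖ := by
        simpa [norm_smul, abs_of_nonneg hη] using
          norm_sub_le (x - y) (η • (gradient f x - gradient f y))
    _ ≤ ‖x - y‖ + η * (L * ‖x - y‖) := by gcongr; exact hL x y
    _ = (1 + η * L) * ‖x - y‖ := by ring

lemma norm_proxGradStep_sub_self_mono (hlam : 0 ≤ lam) {η₁ η₂ : ℝ} (h₁ : 0 < η₁)
    (h₁₂ : η₁ ≤ η₂) (x : EuclideanSpace ℝ (Fin d)) :
    ‖proxGradStep f lam η₁ x - x‖ ≤ ‖proxGradStep f lam η₂ x - x‖ := by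
  set g := gradient f x
  set p₁ := proxGradStep f lam η₁ x
  set p₂ := proxGradStep f lam η₂ x
  have hp₁ := soft_prox_ineq (mul_nonneg h₁.le hlam) (x - η₁ • g) p₂
  have hp₂ := soft_prox_ineq (mul_nonneg (h₁.le.trans h₁₂) hlam) (x - η₂ • g) p₁
  have e₁ : x - η₁ • g - p₁ = (x - p₁) - η₁ • g := by abel
  have e₂ : x - η₂ • g - p₂ = (x - p₂) - η₂ • g := by abel
  have e₃ : p₂ - p₁ = (x - p₁) - (x - p₂) := by abel
  have e₄ : p₁ - p₂ = -((x - p₁) - (x - p₂)) := by abel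
  change η₁ * lam * l1 p₁ + ⟪x - η₁ • g - p₁, p₂ - p₁⟫ ≤ η₁ * lam * l1 p₂ at hp₁
  change η₂ * lam * l1 p₂ + ⟪x - η₂ • g - p₂, p₁ - p₂⟫ ≤ η₂ * lam * l1 p₁ at hp₂
  rw [e₁, e₃] at hp₁
  rw [e₂, e₄] at hp₂
  rw [norm_sub_rev, norm_sub_rev p₂]
  refine norm_le_norm_of_inner_smul_sub_smul_nonpos h₁ h₁₂ ?_
  generalize x - p₁ = a at *
  generalize x - p₂ = b at *
  simp only [inner_sub_left, inner_sub_right, inner_neg_right, real_inner_smul_left]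
    at hp₁ hp₂ ⊢
  have h₂ : 0 ≤ η₂ := h₁.le.trans h₁₂
  -- the weights `η₂, η₁` cancel both the `ℓ¹` and the gradient terms
  linear_combination η₂ * hp₁ + η₁ * hp₂

lemma norm_proxGradStep_sub_self_le_of_gradient_mapping_le (hlam : 0 ≤ lam) (hη : 0 < η)
    (hL : 0 < L) (hηL : η * L ≤ 1) {x : EuclideanSpace ℝ (Fin d)} {G : ℝ}
    (hG : ‖L • (x - soft (lam / L) (x - (1 / L) • gradient f x))‖ ≤ G) :
    ‖proxGradStep f lam η x - x‖ ≤ G / L := by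
  have hmono := norm_proxGradStep_sub_self_mono (f := f) hlam hη ((le_div_iff₀ hL).mpr hηL) x
  rw [show proxGradStep f lam (1 / L) x = soft (lam / L) (x - (1 / L) • gradient f x) by
    rw [proxGradStep, one_div_mul_eq_div]] at hmono
  rw [norm_smul, Real.norm_of_nonneg hL.le, norm_sub_rev] at hG
  exact hmono.trans ((le_div_iff₀' hL).mpr hG)

end ProximalGradient

lemma le_two_mul_of_mul_sq_le {c S D r₀ ε : ℝ} (hc : 3 ≤ c) (hS : 0 < S) (hD : 0 ≤ D)
    (hr₀ : r₀ ≤ 2 * S) (hDc : D ≤ 7 * c * S) (hε : 0 ≤ ε) (hεc : ε * (18 * c ^ 2) ≤ 1)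
    (h : S * D ^ 2 ≤ 6 * c * S ^ 3 + c * ε * ((r₀ + D) * D ^ 2)) :
    D ≤ 2 * c * S := by
  have hcubic : c * ε * (r₀ + D) ≤ S / 2 := by
    calc c * ε * (r₀ + D) ≤ c * ε * (9 * c * S) := by gcongr; nlinarith
      _ = ε * (18 * c ^ 2) * (S / 2) := by ring
      _ ≤ S / 2 := mul_le_of_le_one_left (by positivity) hεc
  have hD2 : D ^ 2 ≤ (2 * c * S) ^ 2 := by
    have : S * D ^ 2 ≤ 12 * c * S ^ 3 := by nlinarith [sq_nonneg D]
    nlinarith [mul_le_mul_of_nonneg_left hc (by positivity : 0 ≤ 4 * c * S ^ 3)]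
  exact (pow_le_pow_iff_left₀ hD (by positivity) two_ne_zero).mp hD2

theorem norm_iterate_sub_le_of_not_sufficient_decrease {d : ℕ}
    {f : EuclideanSpace ℝ (Fin d) → ℝ} {xt : EuclideanSpace ℝ (Fin d)}
    {u : ℕ → EuclideanSpace ℝ (Fin d)} {L ρ lam η S 𝓕 𝓣 c : ℝ}
    (hf : Differentiable ℝ f) (hg : Differentiable ℝ (gradient f))
    (hL : ∀ x y, ‖gradient f x - gradient f y‖ ≤ L * ‖x - y‖)
    (hH : ∀ x y, ‖hess f x - hess f y‖ ≤ ρ * ‖x - y‖) (hρ : 0 ≤ ρ) (hlam : 0 ≤ lam)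
    (hη : 0 < η) (hηL : η * L ≤ 1) (hc : 3 ≤ c) (hS : 0 < S)
    (hres : ‖proxGradStep f lam η xt - xt‖ ≤ S) (hu₀ : ‖u 0 - xt‖ ≤ 2 * S)
    (hu : ∀ t, u (t + 1) = proxGradStep f lam η (u t))
    (h𝓕 : η * 𝓕 * 𝓣 = S ^ 2) (hρS : η * ρ * S * 𝓣 * (18 * c ^ 2) ≤ 1)
    {t : ℕ} (ht : (t : ℝ) < c * 𝓣)
    (hnd : ∀ s ≤ t,
      ¬(ftilde f xt (u 0) (u s) - f (u 0) + lam * l1 (u s) - lam * l1 (u 0) ≤ -3 * 𝓕)) :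
    ‖u t - u 0‖ ≤ 2 * c * S := by
  set F := composite f lam
  have h𝓣 : 0 ≤ 𝓣 := by nlinarith [t.cast_nonneg (α := ℝ)]
  have henergy : ∀ m : ℕ, (m : ℝ) ≤ c * 𝓣 →
      ‖u m - u 0‖ ^ 2 ≤ c * 𝓣 * (2 * η * (F (u 0) - F (u m))) := fun m hm => by
    rw [mul_sub]
    refine sq_norm_sub_le_of_sq_norm_succ_sub_le (a := fun s => 2 * η * F (u s))
      (fun s => ?_) hm
    rw [← mul_sub, hu]
    exact sq_norm_proxGradStep_sub_self_le hlam hη hηL hf hL (u s)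
  have hdecrease : ∀ m ≤ t, F (u 0) - F (u m) ≤
      3 * 𝓕 + ρ / 2 * ((‖u 0 - xt‖ + ‖u m - u 0‖) * ‖u m - u 0‖ ^ 2) := fun m hm => by
    have := (abs_le.mp (abs_sub_ftilde_le hρ hf hg hH xt (u 0) (u m))).1
    have := not_le.mp (hnd m hm)
    simp only [F, composite]
    linarith
  have hstep : ∀ k, ‖u (k + 1) - xt‖ ≤ 2 * ‖u k - xt‖ + S := fun k => by
    rw [hu]
    calc _ ≤ ‖proxGradStep f lam η (u k) - proxGradStep f lam η xt‖
          + ‖proxGradStep f lam η xt - xt‖ := norm_sub_le_norm_sub_add_norm_sub _ _ _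
      _ ≤ (1 + η * L) * ‖u k - xt‖ + S :=
          add_le_add (norm_proxGradStep_sub_proxGradStep_le hlam hη.le hL _ _) hres
      _ ≤ 2 * ‖u k - xt‖ + S := by gcongr; linarith
  suffices ∀ m ≤ t, ‖u m - u 0‖ ≤ 2 * c * S from this t le_rfl
  intro m
  induction m with
  | zero => intro; simp; positivity
  | succ k ih =>
    intro hk
    have hDk := ih (by omega)
    set D := ‖u (k + 1) - u 0‖
    have hm : ((k + 1 : ℕ) : ℝ) ≤ c * 𝓣 := ht.le.trans' (by exact_mod_cast hk)
    have hDc : D ≤ 7 * c * S := by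
      have := norm_sub_le_norm_sub_add_norm_sub (u (k + 1)) xt (u 0)
      have := norm_sub_le_norm_sub_add_norm_sub (u k) (u 0) xt
      rw [norm_sub_rev xt] at *
      nlinarith [hstep k]
    refine le_two_mul_of_mul_sq_le hc hS (norm_nonneg _) hu₀ hDc (by positivity) hρS ?_
    calc S * D ^ 2
        ≤ S * (c * 𝓣 * (2 * η * (3 * 𝓕 + ρ / 2 * ((‖u 0 - xt‖ + D) * D ^ 2)))) := by
          gcongr
          exact (henergy _ hm).trans (by gcongr; exact hdecrease _ hk)
      _ = 6 * c * S * (η * 𝓕 * 𝓣) + c * (η * ρ * S * 𝓣) * ((‖u 0 - xt‖ + D) * D ^ 2) := by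
          ring
      _ = _ := by rw [h𝓕]; ring

lemma one_le_log_div_of_le_div_exp {a δ : ℝ} (hδ : 0 < δ) (h : δ ≤ a / Real.exp 1) :
    1 ≤ Real.log (a / δ) := by
  have he : Real.exp 1 ≤ a / δ := by
    rw [le_div_iff₀ hδ]
    rw [le_div_iff₀ (Real.exp_pos 1)] at h
    linarith
  exact (Real.le_log_iff_exp_le ((Real.exp_pos 1).trans_le he)).mpr he

/-- If proximal gradient iterates started near a saddle point do not yet achieve sufficient
decrease of the (quadratically approximated) objective, they remain in a ball of radius
`O(𝒮 ĉ)` around the saddle point. -/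
theorem iterates_remain_bounded (chat : ℝ) (hchat : 3 ≤ chat) :
    ∃ cmax : ℝ, 0 < cmax ∧
      ∀ (d : ℕ) (f : EuclideanSpace ℝ (Fin d) → ℝ) (L ρ lam γ δ η κ 𝓕 𝓖 𝓢 𝓣 : ℝ)
        (xt : EuclideanSpace ℝ (Fin d)) (u : ℕ → EuclideanSpace ℝ (Fin d)),
        1 ≤ d → 0 < L → 0 < ρ → 0 ≤ lam → 0 < γ →
        Differentiable ℝ f → Differentiable ℝ (gradient f) →
        (∀ x y : EuclideanSpace ℝ (Fin d), ‖gradient f x - gradient f y‖ ≤ L * ‖x - y‖) →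
        (∀ x y : EuclideanSpace ℝ (Fin d), ‖hess f x - hess f y‖ ≤ ρ * ‖x - y‖) →
        κ = L / γ → 0 < δ → δ ≤ d * κ / Real.exp 1 →
        𝓕 = η * L * (γ ^ 3 / ρ ^ 2) / Real.log (d * κ / δ) ^ 3 →
        𝓖 = Real.sqrt (η * L) * (γ ^ 2 / ρ) / Real.log (d * κ / δ) ^ 2 →
        𝓢 = Real.sqrt (η * L) * (γ / ρ) / Real.log (d * κ / δ) →
        𝓣 = Real.log (d * κ / δ) / (η * γ) →
        ‖L • (xt - soft (lam / L) (xt - (1 / L) • gradient f xt))‖ ≤ 𝓖 →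
        (∃ v : EuclideanSpace ℝ (Fin d), ‖v‖ = 1 ∧ ⟪v, hess f xt v⟫ ≤ -γ) →
        ‖u 0 - xt‖ ≤ 2 * 𝓢 / (κ * Real.log (d * κ / δ)) →
        (∀ t, u (t + 1) = soft (η * lam) (u t - η • gradient f (u t))) →
        0 < η → η ≤ cmax / L →
        ∀ t : ℕ, (t : ℝ) < chat * 𝓣 →
          (∀ s ≤ t,
            ¬(ftilde f xt (u 0) (u s) - f (u 0) + lam * l1 (u s) - lam * l1 (u 0) ≤ -3 * 𝓕)) →
          ‖u t - xt‖ ≤ 100 * (𝓢 * chat) := by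
  -- `√(η L) ≤ 1 / (18 ĉ²)` is what absorbs the cubic Taylor term.
  refine ⟨(1 / (18 * chat ^ 2)) ^ 2, by positivity, ?_⟩
  intro d f L ρ lam γ δ η κ 𝓕 𝓖 𝓢 𝓣 xt u _ hL hρ hlam hγ hf hg hgL hH hκ hδ hδe h𝓕 h𝓖 h𝓢 h𝓣
    hres ⟨v, hv, hvH⟩ hu₀ hu hη hηc t ht hnd
  set r := Real.log (d * κ / δ)
  have hr : 1 ≤ r := one_le_log_div_of_le_div_exp hδ hδe
  have hγL : γ ≤ L :=
    (le_opNorm_of_inner_apply_le_neg hv hvH).trans (norm_hess_le hL.le hg hgL xt)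
  have hηL' : η * L ≤ (1 / (18 * chat ^ 2)) ^ 2 := (le_div_iff₀ hL).mp hηc
  have hηL : η * L ≤ 1 := hηL'.trans (pow_le_one₀ (by positivity)
    ((div_le_one (by positivity)).mpr (by nlinarith)))
  have hsqrt : √(η * L) * (18 * chat ^ 2) ≤ 1 :=
    (le_div_iff₀ (by positivity)).mp ((Real.sqrt_le_left (by positivity)).mpr hηL')
  have h𝓢₀ : 0 < 𝓢 := by rw [h𝓢]; positivity
  have h𝓕𝓣 : η * 𝓕 * 𝓣 = 𝓢 ^ 2 := by
    rw [h𝓕, h𝓣, h𝓢]; field_simp; rw [Real.sq_sqrt (by positivity)]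
  have hρ𝓢𝓣 : η * ρ * 𝓢 * 𝓣 = √(η * L) := by rw [h𝓢, h𝓣]; field_simp
  have hresη : ‖proxGradStep f lam η xt - xt‖ ≤ 𝓢 := by
    refine (norm_proxGradStep_sub_self_le_of_gradient_mapping_le hlam hη hL hηL hres).trans ?_
    rw [div_le_iff₀ hL, show 𝓖 = γ / r * 𝓢 by rw [h𝓖, h𝓢]; field_simp]
    nlinarith [(div_le_self hγ.le hr).trans hγL]
  have hu₀' : ‖u 0 - xt‖ ≤ 2 * 𝓢 :=
    hu₀.trans (div_le_self (by positivity) (one_le_mul_of_one_le_of_one_le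
      (by rw [hκ, le_div_iff₀ hγ]; linarith) hr))
  have hloc := norm_iterate_sub_le_of_not_sufficient_decrease hf hg hgL hH hρ.le hlam hη hηL hchat
    h𝓢₀ hresη hu₀' hu h𝓕𝓣 (by rwa [hρ𝓢𝓣]) ht hnd
  calc ‖u t - xt‖ ≤ ‖u t - u 0‖ + ‖u 0 - xt‖ := norm_sub_le_norm_sub_add_norm_sub _ _ _
    _ ≤ 100 * (𝓢 * chat) := by nlinarith
end

section
/- Let f : ℝ^d → ℝ be differentiable with L-Lipschitz gradient, let λ ≥ 0 and let η > 0 satisfy ηL ≤ 1. Let u_t and w_t be two proximal gradient sequences u_{t+1} = S_{ηλ}(u_t − η∇f(u_t)) and w_{t+1} = S_{ηλ}(w_t − η∇f(w_t)). Then for every step, ‖w_{t+1} − u_{t+1}‖ ≥ (1 − ηL)‖w_t − u_t‖ − 2ηλ√d, and consequently for every t ≥ 1, ‖w_t − u_t‖ ≥ (1 − ηL)^t · ‖w₀ − u₀‖ − 2ηλ√d · Σ_{i=0}^{t−1} (1 − ηL)^i. In particular, if λ is small enough that (1 − ηL)^T ‖w₀ − u₀‖ > 2λ√d/L for a given horizon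 T, then ‖w_t − u_t‖ > 0 for all t ≤ T. -/
open Finset

theorem EuclideanSpace.norm_le_sqrt_card_mul {ι : Type*} [Fintype ι] {c : ℝ} (hc : 0 ≤ c)
    {x : EuclideanSpace ℝ ι} (hx : ∀ i, ‖x i‖ ≤ c) : ‖x‖ ≤ √(Fintype.card ι) * c := by
  rw [EuclideanSpace.norm_eq]
  calc √(∑ i, ‖x i‖ ^ 2) ≤ √(∑ _ : ι, c ^ 2) := by gcongr with i; exact hx i
    _ = √(Fintype.card ι) * c := by
      rw [sum_const, card_univ, nsmul_eq_mul, Real.sqrt_mul (Nat.cast_nonneg _),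
        Real.sqrt_sq hc]

theorem abs_sign_mul_max_sub_le {c : ℝ} (hc : 0 ≤ c) (r : ℝ) :
    |Real.sign r * max (|r| - c) 0 - r| ≤ c := by
  rcases lt_trichotomy r 0 with hr | rfl | hr
  · rw [Real.sign_of_neg hr, abs_of_neg hr, abs_le]
    constructor <;> cases max_cases (-r - c) 0 <;> linarith
  · simpa using hc
  · rw [Real.sign_of_pos hr, abs_of_pos hr, abs_le]
    constructor <;> cases max_cases (r - c) 0 <;> linarith

theorem norm_soft_sub_le {d : ℕ} {c : ℝ} (hc : 0 ≤ c) (x : EuclideanSpace ℝ (Fin d)) :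
    ‖soft c x - x‖ ≤ √d * c := by
  simpa using EuclideanSpace.norm_le_sqrt_card_mul hc fun i => abs_sign_mul_max_sub_le hc (x i)

section NormedSpace

variable {E : Type*} [SeminormedAddCommGroup E]

theorem norm_sub_le_norm_map_sub_add {T : E → E} {ε : ℝ} (hT : ∀ x, ‖T x - x‖ ≤ ε) (x y : E) :
    ‖x - y‖ ≤ ‖T x - T y‖ + 2 * ε := by
  have hxy : x - y = (T x - T y) - (T x - x) + (T y - y) := by abel
  calc ‖x - y‖ ≤ ‖(T x - T y) - (T x - x)‖ + ‖T y - y‖ := hxy ▸ norm_add_le _ _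
    _ ≤ ‖T x - T y‖ + ‖T x - x‖ + ‖T y - y‖ := by gcongr; exact norm_sub_le _ _
    _ ≤ ‖T x - T y‖ + 2 * ε := by linarith [hT x, hT y]

theorem one_sub_mul_norm_sub_le_norm_sub_smul_sub [NormedSpace ℝ E] {G : E → E} {L η : ℝ}
    (hη : 0 ≤ η) (hG : ∀ x y, ‖G x - G y‖ ≤ L * ‖x - y‖) (x y : E) :
    (1 - η * L) * ‖x - y‖ ≤ ‖(x - η • G x) - (y - η • G y)‖ := by
  have hxy : (x - η • G x) - (y - η • G y) = (x - y) - η • (G x - G y) := by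
    rw [smul_sub]; abel
  have hstep : ‖η • (G x - G y)‖ ≤ η * L * ‖x - y‖ := by
    rw [norm_smul, Real.norm_of_nonneg hη, mul_assoc]
    exact mul_le_mul_of_nonneg_left (hG x y) hη
  rw [hxy]
  linarith [norm_sub_norm_le (x - y) (η • (G x - G y))]

end NormedSpace

theorem pow_mul_sub_mul_geom_sum_le {a : ℕ → ℝ} {q b : ℝ} (hq : 0 ≤ q)
    (h : ∀ t, q * a t - b ≤ a (t + 1)) (t : ℕ) :
    q ^ t * a 0 - b * ∑ i ∈ range t, q ^ i ≤ a t := by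
  induction t with
  | zero => simp
  | succ t ih =>
    calc q ^ (t + 1) * a 0 - b * ∑ i ∈ range (t + 1), q ^ i
        = q * (q ^ t * a 0 - b * ∑ i ∈ range t, q ^ i) - b := by rw [geom_sum_succ]; ring
      _ ≤ q * a t - b := by gcongr
      _ ≤ a (t + 1) := h t

theorem mul_geom_sum_one_sub_mul_le_div {η L c : ℝ} (hη : 0 < η) (hL : 0 < L) (hηL : η * L ≤ 1)
    (hc : 0 ≤ c) (t : ℕ) : η * c * ∑ i ∈ range t, (1 - η * L) ^ i ≤ c / L := by
  have hsum : ∑ i ∈ range t, (1 - η * L) ^ i ≤ (1 - η * L) ^ 0 / (1 - (1 - η * L)) := by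
    rw [range_eq_Ico]
    exact geom_sum_Ico_le_of_lt_one (by linarith) (by nlinarith)
  calc η * c * ∑ i ∈ range t, (1 - η * L) ^ i
      ≤ η * c * ((1 - η * L) ^ 0 / (1 - (1 - η * L))) := by gcongr
    _ = c / L := by field_simp; ring

theorem coupled_sequences_lower_bound_general (d : ℕ)
    (f : EuclideanSpace ℝ (Fin d) → ℝ) (L : ℝ)
    (hlip : ∀ x y : EuclideanSpace ℝ (Fin d), ‖gradient f x - gradient f y‖ ≤ L * ‖x - y‖)
    (lam η : ℝ) (hlam : 0 ≤ lam) (hη : 0 < η) (hηL : η * L ≤ 1)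
    (u w : ℕ → EuclideanSpace ℝ (Fin d))
    (hu : ∀ t, u (t + 1) = soft (η * lam) (u t - η • gradient f (u t)))
    (hw : ∀ t, w (t + 1) = soft (η * lam) (w t - η • gradient f (w t))) :
    (∀ t, (1 - η * L) * ‖w t - u t‖ - 2 * η * lam * Real.sqrt d ≤ ‖w (t + 1) - u (t + 1)‖) ∧
    (∀ t : ℕ, 1 ≤ t →
      (1 - η * L) ^ t * ‖w 0 - u 0‖ -
          2 * η * lam * Real.sqrt d * ∑ i ∈ Finset.range t, (1 - η * L) ^ i ≤
        ‖w t - u t‖) ∧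
    (0 < L → ∀ T : ℕ,
      2 * lam * Real.sqrt d / L < (1 - η * L) ^ T * ‖w 0 - u 0‖ →
      ∀ t ≤ T, 0 < ‖w t - u t‖) := by
  have hq : 0 ≤ 1 - η * L := by linarith
  have step (t : ℕ) :
      (1 - η * L) * ‖w t - u t‖ - 2 * η * lam * √d ≤ ‖w (t + 1) - u (t + 1)‖ := by
    have hgrad := one_sub_mul_norm_sub_le_norm_sub_smul_sub hη.le hlip (w t) (u t)
    have hsoft := norm_sub_le_norm_map_sub_add (norm_soft_sub_le (mul_nonneg hη.le hlam))
      (w t - η • gradient f (w t)) (u t - η • gradient f (u t))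
    rw [hu, hw]
    linarith
  have unrolled := pow_mul_sub_mul_geom_sum_le hq step
  refine ⟨step, fun t _ => unrolled t, fun hL T hT t ht => ?_⟩
  have hpow : (1 - η * L) ^ T * ‖w 0 - u 0‖ ≤ (1 - η * L) ^ t * ‖w 0 - u 0‖ :=
    mul_le_mul_of_nonneg_right
      (pow_le_pow_of_le_one hq (sub_le_self _ (mul_pos hη hL).le) ht) (norm_nonneg _)
  have hgeom := mul_geom_sum_one_sub_mul_le_div hη hL hηL (by positivity : 0 ≤ 2 * lam * √d) t
  linarith [unrolled t]

/-- Two coupled proximal gradient sequences separate at most geometrically: per-step lower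
bound, iterated lower bound, and positivity of the separation for small `λ`. -/
theorem coupled_sequences_lower_bound (d : ℕ) (hd : 1 ≤ d)
    (f : EuclideanSpace ℝ (Fin d) → ℝ) (L : ℝ)
    (hdiff : Differentiable ℝ f)
    (hlip : ∀ x y : EuclideanSpace ℝ (Fin d), ‖gradient f x - gradient f y‖ ≤ L * ‖x - y‖)
    (lam η : ℝ) (hlam : 0 ≤ lam) (hη : 0 < η) (hηL : η * L ≤ 1)
    (u w : ℕ → EuclideanSpace ℝ (Fin d))
    (hu : ∀ t, u (t + 1) = soft (η * lam) (u t - η • gradient f (u t)))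
    (hw : ∀ t, w (t + 1) = soft (η * lam) (w t - η • gradient f (w t))) :
    (∀ t, (1 - η * L) * ‖w t - u t‖ - 2 * η * lam * Real.sqrt d ≤ ‖w (t + 1) - u (t + 1)‖) ∧
    (∀ t : ℕ, 1 ≤ t →
      (1 - η * L) ^ t * ‖w 0 - u 0‖ -
          2 * η * lam * Real.sqrt d * ∑ i ∈ Finset.range t, (1 - η * L) ^ i ≤
        ‖w t - u t‖) ∧
    (0 < L → ∀ T : ℕ,
      2 * lam * Real.sqrt d / L < (1 - η * L) ^ T * ‖w 0 - u 0‖ →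
      ∀ t ≤ T, 0 < ‖w t - u t‖) :=
  coupled_sequences_lower_bound_general d f L hlip lam η hlam hη hηL u w hu hw
end

section
/- Let d ≥ 1, c ≥ 0, and K ∈ (0, 1]. For any x ∈ ℝ^d, write x = (x₁, x_{−1}) where x_{−1} = (x₂, …, x_d). If ‖x_{−1}‖ ≤ K·|x₁|, then the soft-thresholded vector satisfies ‖(S_c(x))_{−1}‖ ≤ K·|(S_c(x))₁|. That is, soft-thresholding preserves the property that the projection onto the coordinate subspace spanned by the first standard basis vector dominates (by factor 1/K) the projection onto the complementary coordinate subspace. -/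
lemma abs_soft_apply {d : ℕ} {c : ℝ} (hc : 0 ≤ c) (x : EuclideanSpace ℝ (Fin d)) (i : Fin d) :
    |soft c x i| = max (|x i| - c) 0 := by
  simp only [soft, abs_mul, abs_of_nonneg (le_max_right (|x i| - c) 0)]
  rcases lt_trichotomy (x i) 0 with hneg | hzero | hpos
  · rw [Real.sign_of_neg hneg, abs_neg, abs_one, one_mul]
  · simp [hzero, hc]
  · rw [Real.sign_of_pos hpos, abs_one, one_mul]

lemma max_sub_le_div_mul {a b c : ℝ} (hc : 0 ≤ c) (ha : 0 ≤ a) (hab : a ≤ b) :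
    max (a - c) 0 ≤ max (b - c) 0 / b * a := by
  rcases ha.eq_or_lt with rfl | ha
  · simpa using hc
  have hb : 0 < b := ha.trans_le hab
  rw [div_mul_eq_mul_div, le_div_iff₀ hb]
  rcases le_total a c with hac | hca
  · rw [max_eq_right (sub_nonpos.mpr hac), zero_mul]
    positivity
  · rw [max_eq_left (sub_nonneg.mpr hca), max_eq_left (sub_nonneg.mpr (hca.trans hab))]
    nlinarith

lemma abs_le_sqrt_sum_sq {ι : Type*} {s : Finset ι} (f : ι → ℝ) {i : ι} (hi : i ∈ s) :
    |f i| ≤ Real.sqrt (∑ j ∈ s, f j ^ 2) :=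
  Real.abs_le_sqrt (Finset.single_le_sum (fun j _ => sq_nonneg (f j)) hi)

lemma sqrt_sum_sq_le_mul {ι : Type*} (s : Finset ι) {f g : ι → ℝ} {r : ℝ} (hr : 0 ≤ r)
    (h : ∀ i ∈ s, |g i| ≤ r * |f i|) :
    Real.sqrt (∑ i ∈ s, g i ^ 2) ≤ r * Real.sqrt (∑ i ∈ s, f i ^ 2) := by
  have hsq : ∑ i ∈ s, g i ^ 2 ≤ r ^ 2 * ∑ i ∈ s, f i ^ 2 := by
    rw [Finset.mul_sum]
    refine Finset.sum_le_sum fun i hi => ?_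
    rw [← sq_abs (g i), ← sq_abs (f i), ← mul_pow]
    exact pow_le_pow_left₀ (abs_nonneg _) (h i hi) 2
  calc Real.sqrt (∑ i ∈ s, g i ^ 2) ≤ Real.sqrt (r ^ 2 * ∑ i ∈ s, f i ^ 2) :=
        Real.sqrt_le_sqrt hsq
    _ = r * Real.sqrt (∑ i ∈ s, f i ^ 2) := by
        rw [Real.sqrt_mul (sq_nonneg r), Real.sqrt_sq hr]

theorem soft_preserves_domination_general (d : ℕ) (hd : 0 < d) (c K : ℝ) (hc : 0 ≤ c)
    (hK1 : K ≤ 1) (x : EuclideanSpace ℝ (Fin d))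
    (h : Real.sqrt (∑ i ∈ Finset.univ.filter (fun i => i ≠ (⟨0, hd⟩ : Fin d)), (x i) ^ 2) ≤
      K * |x ⟨0, hd⟩|) :
    Real.sqrt (∑ i ∈ Finset.univ.filter (fun i => i ≠ (⟨0, hd⟩ : Fin d)), (soft c x i) ^ 2) ≤
      K * |soft c x ⟨0, hd⟩| := by
  set s := Finset.univ.filter (fun i => i ≠ (⟨0, hd⟩ : Fin d))
  set b := |x ⟨0, hd⟩|
  set gain := max (b - c) 0 / b
  have htail : ∀ i ∈ s, |x i| ≤ b := fun i hi =>
    (abs_le_sqrt_sum_sq x hi).trans (h.trans (mul_le_of_le_one_left (abs_nonneg _) hK1))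
  have hshrink : ∀ i ∈ s, |soft c x i| ≤ gain * |x i| := fun i hi => by
    rw [abs_soft_apply hc]
    exact max_sub_le_div_mul hc (abs_nonneg _) (htail i hi)
  -- at `b = 0` the gain is the junk value `0`, harmless because then `max (b - c) 0 = 0`
  have hgain : gain * b = |soft c x ⟨0, hd⟩| := by
    rw [abs_soft_apply hc, div_mul_cancel_of_imp]
    intro hb
    simpa [hb] using hc
  calc Real.sqrt (∑ i ∈ s, soft c x i ^ 2) ≤ gain * Real.sqrt (∑ i ∈ s, x i ^ 2) :=
        sqrt_sum_sq_le_mul s (by positivity) hshrink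
    _ ≤ gain * (K * b) := by gcongr
    _ = K * |soft c x ⟨0, hd⟩| := by rw [← hgain]; ring

/-- Soft-thresholding preserves domination of the tail coordinates by the first coordinate:
if `‖x₋₁‖ ≤ K |x₁|` with `0 < K ≤ 1`, then `‖(S_c x)₋₁‖ ≤ K |(S_c x)₁|`. -/
theorem soft_preserves_domination (d : ℕ) (hd : 0 < d) (c K : ℝ) (hc : 0 ≤ c)
    (hK0 : 0 < K) (hK1 : K ≤ 1) (x : EuclideanSpace ℝ (Fin d))
    (h : Real.sqrt (∑ i ∈ Finset.univ.filter (fun i => i ≠ (⟨0, hd⟩ : Fin d)), (x i) ^ 2) ≤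
      K * |x ⟨0, hd⟩|) :
    Real.sqrt (∑ i ∈ Finset.univ.filter (fun i => i ≠ (⟨0, hd⟩ : Fin d)), (soft c x i) ^ 2) ≤
      K * |soft c x ⟨0, hd⟩| :=
  soft_preserves_domination_general d hd c K hc hK1 x h
end

section
/- Let f : ℝ^d → ℝ be twice continuously differentiable, λ ≥ 0, and Φ(x) = f(x) + λ‖x‖₁. Suppose x* is a stationary point of Φ, i.e., for every coordinate i: if x*ᵢ ≠ 0 then (∇f(x*))ᵢ = −λ·sign(x*ᵢ), and if x*ᵢ = 0 then |(∇f(x*))ᵢ| ≤ λ. If in addition the Hessian ∇²f(x*) is positive definite (⟨v, ∇²f(x*)v⟩ > 0 for all v ≠ 0), then x* is a strict local minimizer of Φ: there is a neighborhood U of x* such that Φ(x) > Φ(x*) for all x ∈ U with x ≠ x*. -/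
open scoped RealInnerProductSpace

/-!
Split `Φ x - Φ x*` as `(f x - f x* - ⟪x - x*, ∇f x*⟫) + (⟪x - x*, ∇f x*⟫ + λ (‖x‖₁ - ‖x*‖₁))`.
Stationarity says exactly that `-∇f x*` is a subgradient of `λ‖·‖₁` at `x*`, so the second
bracket is nonnegative for every `x`. Positive definiteness is an open condition (compactness of
the unit sphere), so the Hessian stays positive definite on a ball around `x*`; restricting `f` to
segments from `x*` in that ball gives strictly convex functions of one variable, and the first
bracket is positive for `x ≠ x*`.
-/

open Set Topology

section InnerProductSpace

variable {E : Type*} [NormedAddCommGroup E] [InnerProductSpace ℝ E]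

lemma inner_smul_apply_smul (T : E →L[ℝ] E) (c : ℝ) (v : E) :
    ⟪c • v, T (c • v)⟫ = c ^ 2 * ⟪v, T v⟫ := by
  rw [map_smul, real_inner_smul_left, real_inner_smul_right]; ring

lemma eventually_forall_inner_apply_pos [FiniteDimensional ℝ E] {X : Type*} [TopologicalSpace X]
    {H : X → E →L[ℝ] E} {x₀ : X} (hH : ContinuousAt H x₀)
    (hpos : ∀ v ≠ 0, 0 < ⟪v, H x₀ v⟫) :
    ∀ᶠ x in 𝓝 x₀, ∀ v ≠ 0, 0 < ⟪v, H x v⟫ := by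
  have hsphere : ∀ᶠ x in 𝓝 x₀, ∀ u ∈ Metric.sphere (0 : E) 1, 0 < ⟪u, H x u⟫ := by
    refine (isCompact_sphere 0 1).eventually_forall_of_forall_eventually fun u hu => ?_
    have hcont : ContinuousAt (fun z : X × E => ⟪z.2, H z.1 z.2⟫) (x₀, u) :=
      continuousAt_snd.inner ((hH.comp continuousAt_fst).clm_apply continuousAt_snd)
    exact continuousAt_const.eventually_lt hcont (hpos u (ne_zero_of_mem_unit_sphere ⟨u, hu⟩))
  filter_upwards [hsphere] with x hx v hv
  have hv' : 0 < ‖v‖ := norm_pos_iff.mpr hv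
  have hunit : ‖v‖⁻¹ • v ∈ Metric.sphere (0 : E) 1 := by
    simp [norm_smul, hv'.ne']
  have hu := hx _ hunit
  rw [inner_smul_apply_smul] at hu
  exact pos_of_mul_pos_right hu (by positivity)

end InnerProductSpace

section Gradient

variable {E : Type*} [NormedAddCommGroup E] [InnerProductSpace ℝ E] [CompleteSpace E] {f : E → ℝ}

lemma ContDiff.gradient {n : WithTop ℕ∞} (hf : ContDiff ℝ (n + 1) f) :
    ContDiff ℝ n (gradient f) :=
  (InnerProductSpace.toDual ℝ E).symm.contDiff.comp (hf.fderiv_right le_rfl)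

lemma add_inner_gradient_lt_of_inner_fderiv_gradient_pos (hf : Differentiable ℝ f)
    (hf' : Differentiable ℝ (gradient f)) {x y : E}
    (hpos : ∀ z ∈ segment ℝ x y, 0 < ⟪y - x, fderiv ℝ (gradient f) z (y - x)⟫) :
    f x + ⟪y - x, gradient f x⟫ < f y := by
  set h := y - x
  have hγ (t : ℝ) : HasDerivAt (fun s : ℝ => x + s • h) h t := by
    simpa using ((hasDerivAt_id t).smul_const h).const_add x
  have hφ (t : ℝ) : HasDerivAt (fun s => f (x + s • h)) ⟪h, gradient f (x + t • h)⟫ t := by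
    rw [real_inner_comm]
    exact (hf _).hasGradientAt.hasFDerivAt.comp_hasDerivAt t (hγ t)
  have hψ (t : ℝ) : HasDerivAt (fun s => ⟪h, gradient f (x + s • h)⟫)
      ⟪h, fderiv ℝ (gradient f) (x + t • h) h⟫ t :=
    (innerSL ℝ h).hasFDerivAt.comp_hasDerivAt t
      ((hf' _).hasFDerivAt.comp_hasDerivAt t (hγ t))
  have hseg {t : ℝ} (ht : t ∈ Icc (0 : ℝ) 1) : x + t • h ∈ segment ℝ x y :=
    (convex_segment x y).add_smul_sub_mem (left_mem_segment ℝ x y) (right_mem_segment ℝ x y) ht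
  have hmono : StrictMonoOn (fun s : ℝ => ⟪h, gradient f (x + s • h)⟫) (Icc 0 1) := by
    refine strictMonoOn_of_deriv_pos (convex_Icc 0 1)
      (fun t _ => (hψ t).continuousAt.continuousWithinAt) fun t ht => ?_
    rw [(hψ t).deriv]
    exact hpos _ (hseg (interior_subset ht))
  obtain ⟨c, hc, hslope⟩ := exists_hasDerivAt_eq_slope _ _ zero_lt_one
    (fun t _ => (hφ t).continuousAt.continuousWithinAt) fun t _ => hφ t
  have hlt := hmono (left_mem_Icc.mpr zero_le_one) (Ioo_subset_Icc_self hc) hc.1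
  simp only [zero_smul, add_zero, one_smul, h, add_sub_cancel, sub_zero, div_one] at hslope hlt
  linarith

end Gradient

lemma mul_sub_add_mul_abs_sub_abs_nonneg {g b lam : ℝ} (hlam : 0 ≤ lam)
    (hne : b ≠ 0 → g = -lam * Real.sign b) (hzero : b = 0 → |g| ≤ lam) (a : ℝ) :
    0 ≤ g * (a - b) + lam * (|a| - |b|) := by
  rcases lt_trichotomy b 0 with hb | rfl | hb
  · rw [hne hb.ne, Real.sign_of_neg hb, abs_of_neg hb]
    nlinarith [neg_abs_le a]
  · have hga : |g * a| ≤ lam * |a| := by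
      rw [abs_mul]
      exact mul_le_mul_of_nonneg_right (hzero rfl) (abs_nonneg a)
    rw [sub_zero, abs_zero, sub_zero]
    linarith [neg_abs_le (g * a)]
  · rw [hne hb.ne', Real.sign_of_pos hb, abs_of_pos hb]
    nlinarith [le_abs_self a]

lemma inner_sub_add_mul_sum_abs_sub_nonneg {ι : Type*} [Fintype ι] {g x₀ : EuclideanSpace ℝ ι}
    {lam : ℝ} (hlam : 0 ≤ lam)
    (hstat : ∀ i, (x₀ i ≠ 0 → g i = -lam * Real.sign (x₀ i)) ∧ (x₀ i = 0 → |g i| ≤ lam))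
    (x : EuclideanSpace ℝ ι) :
    0 ≤ ⟪x - x₀, g⟫ + lam * (∑ i, |x i| - ∑ i, |x₀ i|) := by
  have hsum : ⟪x - x₀, g⟫ + lam * (∑ i, |x i| - ∑ i, |x₀ i|)
      = ∑ i, (g i * (x i - x₀ i) + lam * (|x i| - |x₀ i|)) := by
    simp [PiLp.inner_apply, Finset.sum_add_distrib, Finset.mul_sum, mul_sub]
  rw [hsum]
  exact Finset.sum_nonneg fun i _ =>
    mul_sub_add_mul_abs_sub_abs_nonneg hlam (hstat i).1 (hstat i).2 (x i)

theorem stationary_posdef_is_strict_local_min_general (d : ℕ)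
    (f : EuclideanSpace ℝ (Fin d) → ℝ) (hf : ContDiff ℝ 2 f)
    (lam : ℝ) (hlam : 0 ≤ lam)
    (Φ : EuclideanSpace ℝ (Fin d) → ℝ) (hΦ : ∀ x, Φ x = f x + lam * ∑ i, |x i|)
    (xs : EuclideanSpace ℝ (Fin d))
    (hstat : ∀ i : Fin d,
      (xs i ≠ 0 → gradient f xs i = -lam * Real.sign (xs i)) ∧
      (xs i = 0 → |gradient f xs i| ≤ lam))
    (hPD : ∀ v : EuclideanSpace ℝ (Fin d), v ≠ 0 → 0 < ⟪v, hess f xs v⟫) :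
    ∃ U ∈ nhds xs, ∀ x ∈ U, x ≠ xs → Φ xs < Φ x := by
  have hgrad : ContDiff ℝ 1 (gradient f) := hf.gradient
  obtain ⟨r, hr, hball⟩ := Metric.eventually_nhds_iff_ball.mp <|
    eventually_forall_inner_apply_pos (hgrad.continuous_fderiv one_ne_zero).continuousAt hPD
  refine ⟨Metric.ball xs r, Metric.ball_mem_nhds xs hr, fun x hx hne => ?_⟩
  have hseg : segment ℝ xs x ⊆ Metric.ball xs r :=
    (convex_ball xs r).segment_subset (Metric.mem_ball_self hr) hx
  have htangent := add_inner_gradient_lt_of_inner_fderiv_gradient_pos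
    (hf.differentiable two_ne_zero) (hgrad.differentiable one_ne_zero)
    fun z hz => hball z (hseg hz) _ (sub_ne_zero.mpr hne)
  have hl1 := inner_sub_add_mul_sum_abs_sub_nonneg hlam hstat x
  rw [hΦ, hΦ]
  linarith

/-- A stationary point of `Φ = f + λ‖·‖₁` at which the Hessian of `f` is positive definite is
a strict local minimizer of `Φ`. -/
theorem stationary_posdef_is_strict_local_min (d : ℕ) (hd : 1 ≤ d)
    (f : EuclideanSpace ℝ (Fin d) → ℝ) (hf : ContDiff ℝ 2 f)
    (lam : ℝ) (hlam : 0 ≤ lam)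
    (Φ : EuclideanSpace ℝ (Fin d) → ℝ) (hΦ : ∀ x, Φ x = f x + lam * ∑ i, |x i|)
    (xs : EuclideanSpace ℝ (Fin d))
    (hstat : ∀ i : Fin d,
      (xs i ≠ 0 → gradient f xs i = -lam * Real.sign (xs i)) ∧
      (xs i = 0 → |gradient f xs i| ≤ lam))
    (hPD : ∀ v : EuclideanSpace ℝ (Fin d), v ≠ 0 → 0 < ⟪v, hess f xs v⟫) :
    ∃ U ∈ nhds xs, ∀ x ∈ U, x ≠ xs → Φ xs < Φ x :=
  stationary_posdef_is_strict_local_min_general d f hf lam hlam Φ hΦ xs hstat hPD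
end

section
/- Let a > 0, ζ ≥ 0, and let T be a positive integer with 4ζT ≤ 1 and ζ√2 ≤ a/2. Let (ψ_t) and (φ_t) be sequences of nonnegative reals with φ₀ = 0, ψ₀ > 0, satisfying for all t < T: ψ_{t+1} ≥ (1 + a)ψ_t − ζ√(ψ_t² + φ_t²) and φ_{t+1} ≤ (1 + a)φ_t + ζ√(ψ_t² + φ_t²). Then for all t ≤ T: (i) φ_t ≤ 4ζt·ψ_t (in particular φ_t ≤ ψ_t), and (ii) ψ_t ≥ (1 + a/2)^t · ψ₀. In other words, the component ψ grows geometrically while the component φ remains dominated by ψ. -/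
/-- Abstract recursion for the projections of the coupled iterate difference onto the escape
direction (`ψ`) and its orthogonal complement (`φ`): `ψ` grows geometrically while `φ`
remains dominated by `ψ`. -/
theorem escape_recursion (a ζ : ℝ) (ha : 0 < a) (hζ : 0 ≤ ζ) (T : ℕ) (hT : 0 < T)
    (hζT : 4 * ζ * (T : ℝ) ≤ 1) (hζa : ζ * Real.sqrt 2 ≤ a / 2)
    (ψ φ : ℕ → ℝ) (hψnn : ∀ t, 0 ≤ ψ t) (hφnn : ∀ t, 0 ≤ φ t)
    (hφ0 : φ 0 = 0) (hψ0 : 0 < ψ 0)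
    (hψrec : ∀ t < T, ψ (t + 1) ≥ (1 + a) * ψ t - ζ * Real.sqrt ((ψ t) ^ 2 + (φ t) ^ 2))
    (hφrec : ∀ t < T, φ (t + 1) ≤ (1 + a) * φ t + ζ * Real.sqrt ((ψ t) ^ 2 + (φ t) ^ 2)) :
    ∀ t ≤ T, (φ t ≤ 4 * ζ * (t : ℝ) * ψ t ∧ φ t ≤ ψ t) ∧ (1 + a / 2) ^ t * ψ 0 ≤ ψ t := by
  have hA0 : (0:ℝ) ≤ Real.sqrt 2 := Real.sqrt_nonneg 2
  have hA2 : Real.sqrt 2 ≤ 2 := by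
    nlinarith [Real.sq_sqrt (by norm_num : (0:ℝ) ≤ 2)]
  intro t
  induction t with
  | zero => intro _; simp [hφ0]; exact hψ0.le
  | succ t ih =>
    intro hle
    have htT : t < T := lt_of_lt_of_le (Nat.lt_succ_self t) hle
    obtain ⟨⟨h1, h2⟩, h3⟩ := ih htT.le
    have hψt : 0 < ψ t := lt_of_lt_of_le (by positivity) h3
    have hsqrt : Real.sqrt ((ψ t) ^ 2 + (φ t) ^ 2) ≤ Real.sqrt 2 * ψ t := by
      have hle2 : (ψ t) ^ 2 + (φ t) ^ 2 ≤ 2 * (ψ t) ^ 2 := by nlinarith [hφnn t]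
      calc Real.sqrt ((ψ t) ^ 2 + (φ t) ^ 2) ≤ Real.sqrt (2 * (ψ t) ^ 2) :=
            Real.sqrt_le_sqrt hle2
        _ = Real.sqrt 2 * ψ t := by
            rw [Real.sqrt_mul (by norm_num : (0:ℝ) ≤ 2), Real.sqrt_sq (hψnn t)]
    have hζs : ζ * Real.sqrt ((ψ t) ^ 2 + (φ t) ^ 2) ≤ ζ * (Real.sqrt 2 * ψ t) :=
      mul_le_mul_of_nonneg_left hsqrt hζ
    have hψ1 : ψ (t + 1) ≥ (1 + a) * ψ t - ζ * (Real.sqrt 2 * ψ t) := by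
      have := hψrec t htT; linarith
    have hψgrow : (1 + a / 2) * ψ t ≤ ψ (t + 1) := by nlinarith [hψt, hζa]
    have hφ1 : φ (t + 1) ≤ (1 + a) * φ t + ζ * (Real.sqrt 2 * ψ t) := by
      have := hφrec t htT; linarith
    have h4ζ : 4 * ζ * ((t:ℝ) + 1) ≤ 1 := by
      have hcast : ((t:ℝ) + 1) ≤ (T:ℝ) := by exact_mod_cast hle
      nlinarith
    have hφnew : φ (t + 1) ≤ 4 * ζ * ((t:ℝ) + 1) * ψ (t + 1) := by
      have key : (1 + a) * φ t + ζ * (Real.sqrt 2 * ψ t)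
          ≤ 4 * ζ * ((t:ℝ) + 1) * ((1 + a) * ψ t - ζ * (Real.sqrt 2 * ψ t)) := by
        have hφle : (1 + a) * φ t ≤ (1 + a) * (4 * ζ * (t:ℝ) * ψ t) :=
          mul_le_mul_of_nonneg_left h1 (by linarith)
        have htnn : (0:ℝ) ≤ (t:ℝ) := Nat.cast_nonneg t
        have hx0 : 0 ≤ ζ * (Real.sqrt 2 * ψ t) := by positivity
        have e2 : 4 * ζ * ((t:ℝ) + 1) * (ζ * (Real.sqrt 2 * ψ t))
            ≤ 1 * (ζ * (Real.sqrt 2 * ψ t)) :=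
          mul_le_mul_of_nonneg_right h4ζ hx0
        have e3 : ζ * (Real.sqrt 2 * ψ t) ≤ 2 * (ζ * ψ t) := by
          nlinarith [mul_nonneg hζ hψt.le]
        have e4 : 0 ≤ ζ * ψ t * a := by positivity
        nlinarith [e2, e3, e4, hφle]
      have hmul : 4 * ζ * ((t:ℝ) + 1) * ((1 + a) * ψ t - ζ * (Real.sqrt 2 * ψ t))
          ≤ 4 * ζ * ((t:ℝ) + 1) * ψ (t + 1) := by
        apply mul_le_mul_of_nonneg_left hψ1 (by positivity)
      linarith
    have hφψ : φ (t + 1) ≤ ψ (t + 1) := by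
      have := mul_le_mul_of_nonneg_right h4ζ (hψnn (t + 1))
      linarith
    refine ⟨⟨?_, hφψ⟩, ?_⟩
    · push_cast; exact hφnew
    · calc (1 + a / 2) ^ (t + 1) * ψ 0 = (1 + a / 2) * ((1 + a / 2) ^ t * ψ 0) := by ring
        _ ≤ (1 + a / 2) * ψ t := mul_le_mul_of_nonneg_left h3 (by linarith)
        _ ≤ ψ (t + 1) := hψgrow
end

section
/- Let d ≥ 2, r > 0, a > 0, x̄ ∈ ℝ^d, and let e₁ be the first standard basis vector of ℝ^d. Let S be a Lebesgue-measurable subset of the closed Euclidean ball B(x̄, r) such that any two points of S on a common line parallel to e₁ are at distance less than a: for all x, y ∈ S with y − x ∈ ℝ·e₁, ‖y − x‖ < a. Then vol_d(S) ≤ a · vol_{d−1}(B^{d−1}(0, r)), where vol_k denotes k-dimensional Lebesgue measure and B^{d−1}(0, r) ⊂ ℝ^{d−1} is the Euclidean ball of radius r. In particular, if a = δr/√d with δ ∈ (0, 1], then vol_d(S) ≤ δ · vol_d(B(x̄, r)). -/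
/-!
Cut the region into lines parallel to `e₁`. Each line meets `S` in a set of diameter at most `a`,
hence of length at most `a`, and only the lines through the projection of `B(x̄, r)` onto `e₁ᗮ`,
a `(d-1)`-ball of radius `r`, meet `S` at all; Fubini gives the first bound. The second reduces to
`r / √d · vol_{d-1}(B_r) ≤ vol_d(B_r)`, i.e. `Γ(d/2 + 1) ≤ √(π d) Γ((d+1)/2)`, which follows from
the log-convexity of `Γ` in the form `Γ(s + 1/2) ≤ √s Γ(s)`.
-/

open MeasureTheory Metric

theorem Real.Gamma_add_half_le_sqrt_mul_Gamma {s : ℝ} (hs : 0 < s) :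
    Real.Gamma (s + 1 / 2) ≤ √s * Real.Gamma s := by
  have hconv := Real.Gamma_mul_add_mul_le_rpow_Gamma_mul_rpow_Gamma hs (by linarith : 0 < s + 1)
    one_half_pos one_half_pos (by norm_num)
  have hΓ : 0 ≤ Real.Gamma s := (Real.Gamma_pos_of_pos hs).le
  calc Real.Gamma (s + 1 / 2) = Real.Gamma (1 / 2 * s + 1 / 2 * (s + 1)) := by ring_nf
    _ ≤ √(Real.Gamma s) * √(s * Real.Gamma s) := by
        simpa only [Real.sqrt_eq_rpow, Real.Gamma_add_one hs.ne'] using hconv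
    _ = √s * Real.Gamma s := by
        rw [← Real.sqrt_mul hΓ, mul_left_comm, Real.sqrt_mul hs.le, Real.sqrt_mul_self hΓ]

theorem volume_prod_le_mul_of_dist_le_on_fibers {β : Type*} [MeasurableSpace β] (ν : Measure β)
    [SFinite ν] {T : Set (ℝ × β)} (hT : MeasurableSet T) {K : Set β} (hK : MeasurableSet K)
    (hTK : ∀ p ∈ T, p.2 ∈ K) {a : ℝ}
    (hfib : ∀ y t t', (t, y) ∈ T → (t', y) ∈ T → dist t t' ≤ a) :
    (volume.prod ν) T ≤ ENNReal.ofReal a * ν K := by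
  have hfiber (y : β) : volume ((·, y) ⁻¹' T) ≤ K.indicator (fun _ ↦ ENNReal.ofReal a) y := by
    by_cases hy : y ∈ K
    · rw [Set.indicator_of_mem hy]
      refine (Real.volume_le_diam _).trans (Metric.ediam_le fun t ht t' ht' ↦ ?_)
      rw [edist_dist]
      exact ENNReal.ofReal_le_ofReal (hfib y t t' ht ht')
    · have : (·, y) ⁻¹' T = ∅ := Set.eq_empty_of_forall_notMem fun t ht ↦ hy (hTK _ ht)
      simp [this, hy]
  calc (volume.prod ν) T = ∫⁻ y, volume ((·, y) ⁻¹' T) ∂ν := Measure.prod_apply_symm hT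
    _ ≤ ∫⁻ y, K.indicator (fun _ ↦ ENNReal.ofReal a) y ∂ν := lintegral_mono hfiber
    _ = ENNReal.ofReal a * ν K := lintegral_indicator_const hK _

namespace EuclideanSpace

def consEquiv (n : ℕ) : ℝ × EuclideanSpace ℝ (Fin n) ≃ᵐ EuclideanSpace ℝ (Fin (n + 1)) :=
  ((MeasurableEquiv.refl ℝ).prodCongr (MeasurableEquiv.toLp 2 _).symm).trans
    ((MeasurableEquiv.piFinSuccAbove (fun _ ↦ ℝ) 0).symm.trans (MeasurableEquiv.toLp 2 _))

variable {n : ℕ}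

@[simp]
theorem consEquiv_apply (t : ℝ) (y : EuclideanSpace ℝ (Fin n)) :
    consEquiv n (t, y) = WithLp.toLp 2 (Fin.cons t y) := by
  ext i
  induction i using Fin.cases <;> rfl

theorem measurePreserving_consEquiv : MeasurePreserving (consEquiv n) :=
  ((MeasurePreserving.id volume).prod (PiLp.volume_preserving_ofLp _)).trans
    ((volume_preserving_piFinSuccAbove (fun _ ↦ ℝ) 0).symm.trans (PiLp.volume_preserving_toLp _))

theorem consEquiv_sub_consEquiv (t t' : ℝ) (y : EuclideanSpace ℝ (Fin n)) :
    consEquiv n (t, y) - consEquiv n (t', y) = (t - t') • single 0 1 := by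
  ext i
  induction i using Fin.cases <;> simp [Fin.succ_ne_zero]

theorem dist_le_dist_consEquiv (p q : ℝ × EuclideanSpace ℝ (Fin n)) :
    dist p.2 q.2 ≤ dist (consEquiv n p) (consEquiv n q) := by
  obtain ⟨t, y⟩ := p
  obtain ⟨t', y'⟩ := q
  simp only [dist_eq, consEquiv_apply, Fin.sum_univ_succ]
  gcongr
  simp

theorem volume_le_of_norm_le_on_lines {S : Set (EuclideanSpace ℝ (Fin (n + 1)))}
    (hS : MeasurableSet S) {x : EuclideanSpace ℝ (Fin (n + 1))} {r a : ℝ}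
    (hSx : S ⊆ closedBall x r)
    (hline : ∀ y ∈ S, ∀ z ∈ S, (∃ s : ℝ, z - y = s • single 0 1) → ‖z - y‖ ≤ a) :
    volume S ≤ ENNReal.ofReal a * volume (closedBall (0 : EuclideanSpace ℝ (Fin n)) r) := by
  set e := consEquiv n
  have hK (p) (hp : p ∈ e ⁻¹' S) : p.2 ∈ closedBall (e.symm x).2 r :=
    (dist_le_dist_consEquiv p (e.symm x)).trans (by simpa [e] using hSx hp)
  have hfib (y : EuclideanSpace ℝ (Fin n)) (t t' : ℝ) (ht : (t, y) ∈ e ⁻¹' S)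
      (ht' : (t', y) ∈ e ⁻¹' S) : dist t t' ≤ a := by
    have hsub := consEquiv_sub_consEquiv t t' y
    have := hline _ ht' _ ht ⟨_, hsub⟩
    rwa [hsub, norm_smul, PiLp.norm_single, norm_one, mul_one, ← dist_eq_norm] at this
  rw [← measurePreserving_consEquiv.measure_preimage hS.nullMeasurableSet,
    ← Measure.addHaar_closedBall_center volume (e.symm x).2]
  exact volume_prod_le_mul_of_dist_le_on_fibers volume (e.measurable hS) measurableSet_closedBall
    hK hfib

open Real in
theorem ofReal_div_sqrt_mul_volume_closedBall_le (n : ℕ) [NeZero n] (r : ℝ) :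
    ENNReal.ofReal (r / √(n + 1 : ℕ)) * volume (closedBall (0 : EuclideanSpace ℝ (Fin n)) r) ≤
      volume (closedBall (0 : EuclideanSpace ℝ (Fin (n + 1))) r) := by
  rcases le_or_gt r 0 with hr | hr
  · simp [ENNReal.ofReal_of_nonpos (div_nonpos_of_nonpos_of_nonneg hr (sqrt_nonneg _))]
  have hΓ : Gamma ((n + 1 : ℕ) / 2 + 1) ≤ √π * √(n + 1 : ℕ) * Gamma (n / 2 + 1) :=
    calc Gamma ((n + 1 : ℕ) / 2 + 1) = Gamma ((n / 2 + 1) + 1 / 2) := by push_cast; ring_nf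
      _ ≤ √(n / 2 + 1) * Gamma (n / 2 + 1) := Gamma_add_half_le_sqrt_mul_Gamma (by positivity)
      _ ≤ √π * √(n + 1 : ℕ) * Gamma (n / 2 + 1) := by
        rw [← sqrt_mul pi_pos.le]
        gcongr
        push_cast
        nlinarith [pi_gt_three]
  have hΓpos : 0 < Gamma ((n + 1 : ℕ) / 2 + 1) := Gamma_pos_of_pos (by positivity)
  rw [volume_closedBall, volume_closedBall, Fintype.card_fin, Fintype.card_fin,
    ← ENNReal.ofReal_pow hr.le, ← ENNReal.ofReal_pow hr.le, ← ENNReal.ofReal_mul (by positivity),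
    ← ENNReal.ofReal_mul (by positivity), ← ENNReal.ofReal_mul (by positivity)]
  gcongr ENNReal.ofReal ?_
  calc r / √(n + 1 : ℕ) * (r ^ n * (√π ^ n / Gamma (n / 2 + 1)))
      = r ^ (n + 1) * √π ^ n / (√(n + 1 : ℕ) * Gamma (n / 2 + 1)) := by
        field_simp
        ring
    _ ≤ r ^ (n + 1) * √π ^ n / (Gamma ((n + 1 : ℕ) / 2 + 1) / √π) := by
        gcongr
        rw [div_le_iff₀ (by positivity)]
        linarith
    _ = r ^ (n + 1) * (√π ^ (n + 1) / Gamma ((n + 1 : ℕ) / 2 + 1)) := by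
        field_simp
        ring

end EuclideanSpace

/-- Fubini/covering estimate: a measurable subset `S` of the ball `B(xbar,r) ⊆ ℝ^d` meeting every
line parallel to `e₁` in a set of diameter less than `a` has volume at most
`a · vol_{d−1}(B^{d−1}(0,r))`; in particular if `a = δr/√d` with `0 < δ ≤ 1` then
`vol(S) ≤ δ · vol(B(xbar,r))`. -/
theorem stuck_region_volume (d : ℕ) (hd : 2 ≤ d) (r a δ : ℝ)
    (hδ0 : 0 < δ) (xbar : EuclideanSpace ℝ (Fin d))
    (e₁ : EuclideanSpace ℝ (Fin d)) (he₁ : e₁ = EuclideanSpace.single (⟨0, by omega⟩ : Fin d) 1)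
    (S : Set (EuclideanSpace ℝ (Fin d))) (hSm : MeasurableSet S)
    (hSsub : S ⊆ closedBall xbar r)
    (hline : ∀ x ∈ S, ∀ y ∈ S, (∃ s : ℝ, y - x = s • e₁) → ‖y - x‖ < a) :
    volume S ≤
        ENNReal.ofReal a * volume (closedBall (0 : EuclideanSpace ℝ (Fin (d - 1))) r) ∧
      (a = δ * r / Real.sqrt d → volume S ≤ ENNReal.ofReal δ * volume (closedBall xbar r)) := by
  obtain ⟨n, rfl⟩ : ∃ n, d = n + 1 := ⟨d - 1, by omega⟩
  have : NeZero n := ⟨by omega⟩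
  subst he₁
  have hvol : volume S ≤ ENNReal.ofReal a * volume (closedBall (0 : EuclideanSpace ℝ (Fin n)) r) :=
    EuclideanSpace.volume_le_of_norm_le_on_lines hSm hSsub
      fun x hx y hy hxy ↦ (hline x hx y hy hxy).le
  refine ⟨hvol, fun ha ↦ hvol.trans ?_⟩
  rw [ha, mul_div_assoc, ENNReal.ofReal_mul hδ0.le, mul_assoc,
    Measure.addHaar_closedBall_center volume xbar]
  gcongr
  exact EuclideanSpace.ofReal_div_sqrt_mul_volume_closedBall_le n r
end

section
/- For every real number x ≥ 0, the Gamma function satisfies Γ(x + 1)/Γ(x + 1/2) < √(x + 1/2). -/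
open Real

/-- Non-strict Gautschi-type bound from log-convexity. -/
lemma gamma_sq_le (a : ℝ) (ha : 0 < a) :
    Real.Gamma (a + 1 / 2) ^ 2 ≤ a * Real.Gamma a ^ 2 := by
  have hga : 0 < Real.Gamma a := Real.Gamma_pos_of_pos ha
  have hgm : 0 < Real.Gamma (a + 1 / 2) := Real.Gamma_pos_of_pos (by linarith)
  have hconv := Real.convexOn_log_Gamma
  have h := hconv.2 (Set.mem_Ioi.mpr ha) (Set.mem_Ioi.mpr (by linarith : (0:ℝ) < a + 1))
    (by norm_num : (0:ℝ) ≤ 1/2) (by norm_num : (0:ℝ) ≤ 1/2) (by norm_num)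
  simp only [Function.comp_apply, smul_eq_mul] at h
  rw [show (1/2:ℝ) * a + 1/2 * (a + 1) = a + 1/2 by ring,
    Real.Gamma_add_one (ne_of_gt ha), Real.log_mul (ne_of_gt ha) (ne_of_gt hga)] at h
  have hlog : Real.log (Real.Gamma (a + 1/2) ^ 2) ≤ Real.log (a * Real.Gamma a ^ 2) := by
    rw [Real.log_pow, Real.log_mul (ne_of_gt ha) (by positivity), Real.log_pow]
    push_cast
    linarith
  exact (Real.log_le_log_iff (by positivity) (by positivity)).mp hlog

/-- For every `x ≥ 0`, the Gamma function satisfies `Γ(x+1)/Γ(x+1/2) < √(x+1/2)`. -/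
theorem gamma_ratio_lt_sqrt (x : ℝ) (hx : 0 ≤ x) :
    Real.Gamma (x + 1) / Real.Gamma (x + 1 / 2) < Real.sqrt (x + 1 / 2) := by
  set a : ℝ := x + 1 / 2 with ha_def
  have ha : 0 < a := by simp only [ha_def]; linarith
  have hga : 0 < Real.Gamma a := Real.Gamma_pos_of_pos ha
  have hgm : 0 < Real.Gamma (a + 1 / 2) := Real.Gamma_pos_of_pos (by linarith)
  -- apply the lemma at a + 1
  have h := gamma_sq_le (a + 1) (by linarith)
  have e1 : Real.Gamma (a + 1 + 1/2) = (a + 1/2) * Real.Gamma (a + 1/2) := by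
    rw [show a + 1 + 1/2 = (a + 1/2) + 1 by ring, Real.Gamma_add_one (by positivity)]
  have e2 : Real.Gamma (a + 1) = a * Real.Gamma a := Real.Gamma_add_one (ne_of_gt ha)
  rw [e1, e2] at h
  -- h : ((a+1/2) * Γ(a+1/2))^2 ≤ (a+1) * (a * Γ a)^2
  have hstrict : Real.Gamma (a + 1/2) ^ 2 < a * Real.Gamma a ^ 2 := by
    have key : (a + 1/2)^2 * Real.Gamma (a + 1/2) ^ 2 ≤ (a+1) * a^2 * Real.Gamma a ^ 2 := by
      nlinarith [h]
    have hlt : (a+1) * a^2 * Real.Gamma a ^ 2 < (a + 1/2)^2 * (a * Real.Gamma a ^ 2) := by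
      nlinarith [sq_nonneg (Real.Gamma a), hga]
    nlinarith [sq_nonneg (a + 1/2), ha]
  have hmain : Real.Gamma (a + 1/2) < Real.sqrt a * Real.Gamma a := by
    have hrhs : 0 < Real.sqrt a * Real.Gamma a := by positivity
    have hsq : (Real.sqrt a * Real.Gamma a) ^ 2 = a * Real.Gamma a ^ 2 := by
      rw [mul_pow, Real.sq_sqrt ha.le]
    refine lt_of_pow_lt_pow_left₀ 2 hrhs.le ?_
    rw [hsq]; exact hstrict
  have hx1 : x + 1 = a + 1/2 := by rw [ha_def]; ring
  rw [hx1, div_lt_iff₀ hga]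
  exact hmain
end
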